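/- Let c > 0 be an integer with gcd(d,c) = 1 and let θ = gcd(c,3). Then 12·c·s(d,c) ≡ d + d* (mod θc), where d* is an inverse of d modulo θc. -/

import Mathlib

/-!
For `0 < r < c` both sawtooth values are fractional parts minus `1/2`, and `r ↦ dr mod c`
permutes the residues mod `c`. Expanding the product therefore turns `12 c s(d, c)` into the
explicit integer `k = 2d(c-1)(2c-1) - 12 ∑ r ⌊dr/c⌋ - 3c(c-1)`. Summing
`(dr mod c)² = (dr - c⌊dr/c⌋)²` and using `∑ (dr mod c)² = ∑ r²` gives
`12 d ∑ r ⌊dr/c⌋ = (d²-1)(c-1)(2c-1) + 6c ∑ ⌊dr/c⌋²`, hence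
`d k ≡ (d²+1)(c-1)(2c-1) ≡ d² + 1` modulo `θc`, which divides both `3c` and `c²`.
Multiplying by `d*` gives `k ≡ d + d*`.
-/

open Real

/-- The sawtooth function `((x))`. -/
noncomputable def saw (x : ℝ) : ℝ :=
  if Int.fract x = 0 then 0 else x - ⌊x⌋ - 1 / 2

/-- The Dedekind sum `s(d, c) = ∑_{r mod c} ((r/c)) ((dr/c))`. -/
noncomputable def dedekindSum (d c : ℤ) : ℝ :=
  ∑ r ∈ Finset.range c.toNat, saw ((r : ℝ) / (c : ℝ)) * saw ((d : ℝ) * (r : ℝ) / (c : ℝ))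

open Finset

theorem saw_eq_fract_sub {x : ℝ} (hx : Int.fract x ≠ 0) : saw x = Int.fract x - 1 / 2 := by
  rw [saw, if_neg hx, Int.fract]

theorem saw_intCast_div {m : ℤ} {n : ℕ} (hn : 0 < n) (hm : ¬ (n : ℤ) ∣ m) :
    saw (m / n) = ((m % n : ℤ) : ℝ) / n - 1 / 2 := by
  have hfract : Int.fract ((m : ℝ) / n) = ((m % n : ℤ) : ℝ) / n :=
    Int.fract_div_intCast_eq_div_intCast_mod
  have hne : Int.fract ((m : ℝ) / n) ≠ 0 := by
    rw [hfract, Ne, div_eq_zero_iff, not_or, Int.cast_eq_zero]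
    exact ⟨fun h => hm (Int.dvd_of_emod_eq_zero h), by positivity⟩
  rw [saw_eq_fract_sub hne, hfract]

theorem mul_mul_emod_emod_of_mul_modEq_one {d e : ℤ} {n r : ℕ} (hde : e * d ≡ 1 [ZMOD n])
    (hr : r < n) :
    e * (d * r % n) % n = r := by
  have : e * (d * r % n) ≡ r [ZMOD n] :=
    calc e * (d * r % n) ≡ e * (d * r) [ZMOD n] := (Int.mod_modEq _ _).mul_left e
      _ = (e * d) * r := by ring
      _ ≡ 1 * r [ZMOD n] := hde.mul_right r
      _ = r := one_mul _
  rw [this]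
  exact Int.emod_eq_of_lt (by positivity) (by omega)

theorem sum_range_comp_mul_emod {M : Type*} [AddCommMonoid M] {d : ℤ} {n : ℕ}
    (hd : IsCoprime d n) (g : ℤ → M) :
    ∑ r ∈ range n, g (d * r % n) = ∑ r ∈ range n, g r := by
  rcases n.eq_zero_or_pos with rfl | hn
  · simp
  obtain ⟨e, v, hev⟩ := hd
  have hed : e * d ≡ 1 [ZMOD n] := Int.modEq_iff_dvd.mpr ⟨v, by linear_combination -hev⟩
  have hde : d * e ≡ 1 [ZMOD n] := by rwa [mul_comm]
  have hbound (a : ℤ) : 0 ≤ a % n ∧ a % n < n :=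
    ⟨Int.emod_nonneg a (by omega), Int.emod_lt_of_pos a (by omega)⟩
  refine sum_nbij' (fun r => (d * r % n).toNat) (fun r => (e * r % n).toNat) ?_ ?_ ?_ ?_ ?_
    <;> simp only [mem_range]
  · intro r _; have := hbound (d * r); omega
  · intro r _; have := hbound (e * r); omega
  · intro r hr
    rw [Int.toNat_of_nonneg (hbound _).1, mul_mul_emod_emod_of_mul_modEq_one hed hr,
      Int.toNat_natCast]
  · intro r hr
    rw [Int.toNat_of_nonneg (hbound _).1, mul_mul_emod_emod_of_mul_modEq_one hde hr,
      Int.toNat_natCast]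
  · intro r _; rw [Int.toNat_of_nonneg (hbound _).1]

theorem dedekindSum_natCast (d : ℤ) (n : ℕ) :
    dedekindSum d n = ∑ r ∈ range n, saw (r / n) * saw (((d * r : ℤ) : ℝ) / n) := by
  simp only [dedekindSum, Int.toNat_natCast, Int.cast_natCast, Int.cast_mul]

theorem saw_mul_saw_eq {d : ℤ} {n r : ℕ} (hd : IsCoprime d n) (hr : r < n) :
    saw (r / n) * saw (((d * r : ℤ) : ℝ) / n) =
      (2 * r - n) * (2 * (d * r % n : ℤ) - n) / (4 * n ^ 2) - if r = 0 then 1 / 4 else 0 := by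
  have hn : (n : ℝ) ≠ 0 := Nat.cast_ne_zero.mpr (by omega)
  rcases r.eq_zero_or_pos with rfl | hr0
  · simp [saw, field]
  have hndvd : ¬ (n : ℤ) ∣ r := fun h => absurd (Int.le_of_dvd (by omega) h) (by omega)
  have hsaw_r := saw_intCast_div (m := r) (by omega) hndvd
  rw [Int.cast_natCast, Int.emod_eq_of_lt (by omega) (by omega), Int.cast_natCast] at hsaw_r
  rw [hsaw_r, saw_intCast_div (by omega) (fun h => hndvd (hd.symm.dvd_of_dvd_mul_left h)),
    if_neg hr0.ne']
  field_simp
  ring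

theorem dedekindSum_eq_sum_centered_mul_div {d : ℤ} {n : ℕ} (hn : 0 < n)
    (hd : IsCoprime d n) :
    dedekindSum d n =
      ((∑ r ∈ range n, (2 * r - n) * (2 * (d * r % n) - n) : ℤ) : ℝ) / (4 * n ^ 2) -
        1 / 4 := by
  rw [dedekindSum_natCast, sum_congr rfl fun r hr => saw_mul_saw_eq hd (mem_range.mp hr),
    sum_sub_distrib, sum_ite_eq' _ _ _, if_pos (mem_range.mpr hn), ← sum_div]
  push_cast
  rfl

theorem two_mul_sum_range_id (n : ℕ) : 2 * ∑ r ∈ range n, (r : ℤ) = n * (n - 1) := by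
  induction n with
  | zero => simp
  | succ n ih =>
    rw [sum_range_succ]
    push_cast
    linear_combination ih

theorem six_mul_sum_range_sq (n : ℕ) :
    6 * ∑ r ∈ range n, (r : ℤ) ^ 2 = n * (n - 1) * (2 * n - 1) := by
  induction n with
  | zero => simp
  | succ n ih =>
    rw [sum_range_succ]
    push_cast
    linear_combination ih

def dedekindSumNumerator (d : ℤ) (n : ℕ) : ℤ :=
  2 * d * (n - 1) * (2 * n - 1) - 12 * ∑ r ∈ range n, (r : ℤ) * (d * r / n) - 3 * n * (n - 1)

theorem three_mul_sum_centered_mul_eq {d : ℤ} {n : ℕ} (hd : IsCoprime d n) :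
    3 * ∑ r ∈ range n, (2 * r - n) * (2 * (d * r % n) - n) =
      n * (dedekindSumNumerator d n + 3 * n) := by
  have hterm (r : ℕ) : (2 * r - n) * (2 * (d * r % n) - n) =
      4 * d * r ^ 2 - 4 * n * (r * (d * r / n)) - 2 * n * r - 2 * n * (d * r % n) + n ^ 2 := by
    rw [Int.emod_def]; ring
  have hperm : ∑ r ∈ range n, (d * r % n) = ∑ r ∈ range n, (r : ℤ) :=
    sum_range_comp_mul_emod hd id
  rw [sum_congr rfl fun r _ => hterm r]
  simp only [sum_add_distrib, sum_sub_distrib, ← mul_sum, sum_const, card_range, nsmul_eq_mul]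
  rw [dedekindSumNumerator, hperm]
  linear_combination (2 * d) * six_mul_sum_range_sq n - (6 * n) * two_mul_sum_range_id n

theorem twelve_mul_dedekindSum {d : ℤ} {n : ℕ} (hn : 0 < n) (hd : IsCoprime d n) :
    12 * n * dedekindSum d n = dedekindSumNumerator d n := by
  have hsum : (3 : ℝ) * ((∑ r ∈ range n, (2 * r - n) * (2 * (d * r % n) - n) : ℤ) : ℝ) =
      n * (dedekindSumNumerator d n + 3 * n) := by
    exact_mod_cast three_mul_sum_centered_mul_eq hd
  rw [dedekindSum_eq_sum_centered_mul_div hn hd]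
  field_simp
  linear_combination 4 * hsum

theorem twelve_mul_mul_sum_mul_ediv {d : ℤ} {n : ℕ} (hn : 0 < n) (hd : IsCoprime d n) :
    12 * d * ∑ r ∈ range n, (r : ℤ) * (d * r / n) =
      (d ^ 2 - 1) * (n - 1) * (2 * n - 1) + 6 * n * ∑ r ∈ range n, (d * r / n) ^ 2 := by
  have hterm (r : ℕ) : (d * r % n) ^ 2 =
      d ^ 2 * r ^ 2 - 2 * d * n * (r * (d * r / n)) + n ^ 2 * (d * r / n) ^ 2 := by
    rw [Int.emod_def]; ring
  have hperm := sum_range_comp_mul_emod hd (· ^ 2)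
  simp only [sum_congr rfl fun r _ => hterm r, sum_add_distrib, sum_sub_distrib,
    ← mul_sum] at hperm
  have hn' : (n : ℤ) ≠ 0 := by positivity
  refine mul_left_cancel₀ hn' ?_
  linear_combination -6 * hperm + (d ^ 2 - 1) * six_mul_sum_range_sq n

theorem mul_dedekindSumNumerator_modEq {d m : ℤ} {n : ℕ} (hn : 0 < n) (hd : IsCoprime d n)
    (hm3 : m ∣ 3) (hmn : m ∣ n) :
    d * dedekindSumNumerator d n ≡ d ^ 2 + 1 [ZMOD m * n] := by
  obtain ⟨u, hu⟩ := hm3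
  obtain ⟨v, hv⟩ := hmn
  have hR := twelve_mul_mul_sum_mul_ediv hn hd
  set Q := ∑ r ∈ range n, (d * r / n) ^ 2
  rw [Int.modEq_iff_dvd, dedekindSumNumerator]
  refine ⟨-((d ^ 2 + 1) * (2 * v - u) - 2 * u * Q - u * (n - 1) * d), ?_⟩
  linear_combination
    hR - 2 * n * (d ^ 2 + 1) * hv + (n * (d ^ 2 + 1) + 2 * n * Q + n * (n - 1) * d) * hu

theorem Int.ModEq.add_of_mul_modEq {m d d' k : ℤ} (hk : d * k ≡ d ^ 2 + 1 [ZMOD m])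
    (hd : d * d' ≡ 1 [ZMOD m]) : k ≡ d + d' [ZMOD m] :=
  calc k = 1 * k := (one_mul k).symm
    _ ≡ d * d' * k [ZMOD m] := hd.symm.mul_right k
    _ = d' * (d * k) := by ring
    _ ≡ d' * (d ^ 2 + 1) [ZMOD m] := hk.mul_left d'
    _ = d * (d * d') + d' := by ring
    _ ≡ d * 1 + d' [ZMOD m] := (hd.mul_left d).add_right d'
    _ = d + d' := by rw [mul_one]

theorem twelve_c_dedekindSum_congr (d c : ℤ) (hc : 0 < c) (hdc : Int.gcd d c = 1)
    (dstar : ℤ) (hstar : d * dstar ≡ 1 [ZMOD (Int.gcd c 3 * c)]) :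
    ∃ k : ℤ, ((12 * c : ℤ) : ℝ) * dedekindSum d c = (k : ℝ) ∧
      k ≡ d + dstar [ZMOD (Int.gcd c 3 * c)] := by
  lift c to ℕ using hc.le with n
  have hn : 0 < n := by exact_mod_cast hc
  have hd : IsCoprime d n := Int.isCoprime_iff_gcd_eq_one.mpr hdc
  refine ⟨dedekindSumNumerator d n, by push_cast; exact twelve_mul_dedekindSum hn hd, ?_⟩
  exact (mul_dedekindSumNumerator_modEq hn hd (Int.gcd_dvd_right _ _)
    (Int.gcd_dvd_left _ _)).add_of_mul_modEq hstar
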